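/- arXiv:2508.15140 — 2 statements merged into one kernel-verified Lean document; each statement's English description precedes it below -/
import Mathlib

section
/- Let p > 2, μ ∈ W_p(M), and let V[μ] be a probability measure on X^{2,∞}(M) with finite p-th moment. Define the averaged flow operator f_t^V(μ) = ∫ (ρ_{√t}^{X − V̄[μ]})_* μ dV[μ](X). Then f_t^V(μ) ∈ W_p(M) for all t ∈ [0,T], and for all s,t ∈ [0,T], W_p(f_s^V(μ), f_t^V(μ)) ≤ √|t−s| · (‖V̄[μ]‖_∞ + M_p(V[μ])^{1/p}). -/
open MeasureTheory ENNReal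

/-- A coupling (transport plan) between two measures. -/
def IsCoupling {X : Type*} [MeasurableSpace X] (μ ν : Measure X) (γ : Measure (X × X)) : Prop :=
  γ.map Prod.fst = μ ∧ γ.map Prod.snd = ν

/-- The `p`-Wasserstein distance: infimum over couplings of `(∫ d(x,y)^p dγ)^{1/p}`. -/
noncomputable def wassersteinDist {X : Type*} [MeasurableSpace X] [PseudoEMetricSpace X]
    (p : ℝ) (μ ν : Measure X) : ℝ≥0∞ :=
  ⨅ (γ : Measure (X × X)) (_ : IsCoupling μ ν γ),
    (∫⁻ z, edist z.1 z.2 ^ p ∂γ) ^ (1 / p)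

private lemma sqrt_sub_le_aux {s t : ℝ} (hs : 0 ≤ s) (hst : s ≤ t) :
    Real.sqrt t - Real.sqrt s ≤ Real.sqrt (t - s) := by
  have h2 : t ≤ (Real.sqrt s + Real.sqrt (t - s)) ^ 2 := by
    nlinarith [Real.sq_sqrt hs, Real.sq_sqrt (sub_nonneg.2 hst), Real.sqrt_nonneg s,
      Real.sqrt_nonneg (t - s)]
  have h1 : Real.sqrt t ≤ Real.sqrt s + Real.sqrt (t - s) := by
    calc Real.sqrt t ≤ Real.sqrt ((Real.sqrt s + Real.sqrt (t - s)) ^ 2) :=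
          Real.sqrt_le_sqrt h2
      _ = Real.sqrt s + Real.sqrt (t - s) := Real.sqrt_sq (by positivity)
  linarith

private lemma abs_sqrt_sub_sqrt_le {s t : ℝ} (hs : 0 ≤ s) (ht : 0 ≤ t) :
    |Real.sqrt t - Real.sqrt s| ≤ Real.sqrt |t - s| := by
  rcases le_total s t with h | h
  · rw [abs_of_nonneg (sub_nonneg.2 (Real.sqrt_le_sqrt h)), abs_of_nonneg (sub_nonneg.2 h)]
    exact sqrt_sub_le_aux hs h
  · rw [abs_sub_comm, abs_sub_comm t s,
      abs_of_nonneg (sub_nonneg.2 (Real.sqrt_le_sqrt h)), abs_of_nonneg (sub_nonneg.2 h)]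
    exact sqrt_sub_le_aux ht h

private lemma flow_edist_le {E : Type*} [NormedAddCommGroup E] [NormedSpace ℝ E]
    {f f' : ℝ → E} {K : ℝ} (hd : ∀ u, HasDerivAt f (f' u) u)
    (hK : ∀ u, ‖f' u‖ ≤ K) (a b : ℝ) :
    edist (f a) (f b) ≤ ENNReal.ofReal (|b - a| * K) := by
  have h := Convex.norm_image_sub_le_of_norm_hasDerivWithin_le
    (f := f) (f' := f') (s := Set.univ)
    (fun u _ => (hd u).hasDerivWithinAt) (fun u _ => hK u) convex_univ
    (Set.mem_univ b) (Set.mem_univ a)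
  rw [edist_dist, dist_eq_norm]
  refine ENNReal.ofReal_le_ofReal ?_
  calc ‖f a - f b‖ ≤ K * ‖a - b‖ := h
    _ = |b - a| * K := by rw [Real.norm_eq_abs, abs_sub_comm]; ring

set_option maxHeartbeats 1000000 in
/-- for `p > 2`, `μ ∈ W_p(M)` and a probability measure `V[μ]` on
`W^{2,∞}`-vector fields with finite `p`-th moment (random field `ξ` with
`‖ξ_ω‖_{W^{2,∞}} ≤ Nrm ω`, `M_p = ∫ Nrm^p dP < ∞`), the averaged flow operator
`f_t^V(μ) = ∫ (ρ_{√t}^{X − V̄[μ]})_* μ dV[μ](X)` — realized as the pushforward of `P ⊗ μ`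
under `(ω,x) ↦ Φ_ω(√t, x)` where `Φ_ω` is the flow of `ξ_ω − V̄[μ]` — lies in `W_p(M)` for
all `t ∈ [0,T]`, and `W_p(f_s^V(μ), f_t^V(μ)) ≤ √|t−s|·(‖V̄[μ]‖_∞ + M_p^{1/p})`. -/
theorem averaged_flow_operator_estimate {n : ℕ} (p T : ℝ) (hp : 2 < p) (hT : 0 < T)
    (Ω : Type*) [MeasurableSpace Ω] (P : Measure Ω) [IsProbabilityMeasure P]
    (ξ : Ω → EuclideanSpace ℝ (Fin n) → EuclideanSpace ℝ (Fin n))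
    (Nrm : Ω → ℝ) (hNp : Integrable (fun ω => Nrm ω ^ p) P)
    (hb0 : ∀ ω x, ‖ξ ω x‖ ≤ Nrm ω)
    (hint : ∀ x, Integrable (fun ω => ξ ω x) P)
    (Vbar : EuclideanSpace ℝ (Fin n) → EuclideanSpace ℝ (Fin n))
    (hVbar : ∀ x, Vbar x = ∫ ω, ξ ω x ∂P)
    (C : ℝ) (hC : ∀ x, ‖Vbar x‖ ≤ C)
    (Φ : Ω → ℝ → EuclideanSpace ℝ (Fin n) → EuclideanSpace ℝ (Fin n))
    (hΦ0 : ∀ ω x, Φ ω 0 x = x)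
    (hΦ : ∀ ω x s, HasDerivAt (fun u => Φ ω u x) (ξ ω (Φ ω s x) - Vbar (Φ ω s x)) s)
    (hΦmeas : ∀ t, Measurable (fun q : Ω × EuclideanSpace ℝ (Fin n) => Φ q.1 t q.2))
    (μ : Measure (EuclideanSpace ℝ (Fin n))) [IsProbabilityMeasure μ]
    (x₀ : EuclideanSpace ℝ (Fin n)) (hμ : ∫⁻ x, edist x x₀ ^ p ∂μ ≠ ∞)
    (s t : ℝ) (hs : s ∈ Set.Icc (0:ℝ) T) (ht : t ∈ Set.Icc (0:ℝ) T) :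
    (∫⁻ x, edist x x₀ ^ p
        ∂((P.prod μ).map (fun q => Φ q.1 (Real.sqrt t) q.2)) ≠ ∞) ∧
    wassersteinDist p
        ((P.prod μ).map (fun q => Φ q.1 (Real.sqrt s) q.2))
        ((P.prod μ).map (fun q => Φ q.1 (Real.sqrt t) q.2)) ≤
      ENNReal.ofReal
        (Real.sqrt |t - s| * (C + (∫ ω, Nrm ω ^ p ∂P) ^ (1 / p))) := by
  obtain ⟨hs0, hsT⟩ := hs
  obtain ⟨ht0, htT⟩ := ht
  have hp0 : (0:ℝ) < p := by linarith
  have hp1 : (1:ℝ) ≤ p := by linarith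
  have hC0 : 0 ≤ C := le_trans (norm_nonneg _) (hC 0)
  have hN0 : ∀ ω, 0 ≤ Nrm ω := fun ω => le_trans (norm_nonneg _) (hb0 ω 0)
  have hM0 : 0 ≤ ∫ ω, Nrm ω ^ p ∂P :=
    integral_nonneg fun ω => Real.rpow_nonneg (hN0 ω) p
  set M : ℝ := ∫ ω, Nrm ω ^ p ∂P with hM
  -- pointwise flow distance estimate
  have key : ∀ (a b : ℝ) (q : Ω × EuclideanSpace ℝ (Fin n)),
      edist (Φ q.1 a q.2) (Φ q.1 b q.2) ≤ ENNReal.ofReal (|b - a| * (Nrm q.1 + C)) := by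
    intro a b q
    refine flow_edist_le (hΦ q.1 q.2) (fun u => ?_) a b
    exact (norm_sub_le _ _).trans (add_le_add (hb0 _ _) (hC _))
  -- measurability of Nrm
  have mNp : AEMeasurable (fun ω => Nrm ω ^ p) P := hNp.aemeasurable
  have mNrm : AEMeasurable Nrm P := by
    have hcont : Continuous (fun x : ℝ => x ^ p⁻¹) :=
      Real.continuous_rpow_const (by positivity)
    have := hcont.measurable.comp_aemeasurable mNp
    refine this.congr (Filter.Eventually.of_forall fun ω => ?_)
    exact Real.rpow_rpow_inv (hN0 ω) hp0.ne'
  -- marginals of the product measure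
  have hfst : (P.prod μ).map Prod.fst = P := by
    simp [Measure.map_fst_prod]
  have hsnd : (P.prod μ).map Prod.snd = μ := by
    simp [Measure.map_snd_prod]
  have prodfst : ∀ h : Ω → ℝ≥0∞, AEMeasurable h P →
      ∫⁻ q, h q.1 ∂(P.prod μ) = ∫⁻ ω, h ω ∂P := by
    intro h mh
    have := lintegral_map' (f := h) (g := Prod.fst) (μ := P.prod μ)
      (by rwa [hfst]) measurable_fst.aemeasurable
    rw [hfst] at this
    exact this.symm
  -- the central moment bound
  set I : ℝ≥0∞ := ∫⁻ ω, ENNReal.ofReal (Nrm ω + C) ^ p ∂P with hI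
  have Ibound : I ^ (1 / p) ≤ ENNReal.ofReal C + ENNReal.ofReal (M ^ (1 / p)) := by
    have hsplit : ∀ ω, ENNReal.ofReal (Nrm ω + C)
        = ENNReal.ofReal (Nrm ω) + ENNReal.ofReal C := fun ω => ENNReal.ofReal_add (hN0 ω) hC0
    have hmink := ENNReal.lintegral_Lp_add_le (μ := P)
      (f := fun ω => ENNReal.ofReal (Nrm ω)) (g := fun _ => ENNReal.ofReal C)
      mNrm.ennreal_ofReal aemeasurable_const hp1
    have e1 : (∫⁻ ω, ENNReal.ofReal (Nrm ω) ^ p ∂P) ^ (1 / p)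
        = ENNReal.ofReal (M ^ (1 / p)) := by
      have : ∀ ω, ENNReal.ofReal (Nrm ω) ^ p = ENNReal.ofReal (Nrm ω ^ p) := fun ω =>
        ENNReal.ofReal_rpow_of_nonneg (hN0 ω) hp0.le
      simp_rw [this]
      rw [← ofReal_integral_eq_lintegral_ofReal hNp
        (Filter.Eventually.of_forall fun ω => Real.rpow_nonneg (hN0 ω) p),
        ENNReal.ofReal_rpow_of_nonneg hM0 (by positivity)]
    have e2 : (∫⁻ _ : Ω, ENNReal.ofReal C ^ p ∂P) ^ (1 / p) = ENNReal.ofReal C := by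
      rw [lintegral_const, measure_univ, mul_one, ← ENNReal.rpow_mul,
        mul_one_div_cancel hp0.ne', ENNReal.rpow_one]
    calc I ^ (1 / p)
        = (∫⁻ ω, (ENNReal.ofReal (Nrm ω) + ENNReal.ofReal C) ^ p ∂P) ^ (1 / p) := by
          rw [hI]; simp_rw [hsplit]
      _ ≤ (∫⁻ ω, ENNReal.ofReal (Nrm ω) ^ p ∂P) ^ (1 / p)
          + (∫⁻ _ : Ω, ENNReal.ofReal C ^ p ∂P) ^ (1 / p) := hmink
      _ = ENNReal.ofReal (M ^ (1 / p)) + ENNReal.ofReal C := by rw [e1, e2]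
      _ = ENNReal.ofReal C + ENNReal.ofReal (M ^ (1 / p)) := add_comm _ _
  have Ifin : I ≠ ∞ := by
    intro hcon
    rw [hcon, ENNReal.top_rpow_of_pos (by positivity)] at Ibound
    exact (ENNReal.add_lt_top.2 ⟨ENNReal.ofReal_lt_top, ENNReal.ofReal_lt_top⟩).ne
      (top_le_iff.mp Ibound)
  -- generic bound: lintegral over the product of ofReal (c * (Nrm + C)) ^ p
  have prodI : ∀ c : ℝ, 0 ≤ c →
      ∫⁻ q : Ω × EuclideanSpace ℝ (Fin n),
        ENNReal.ofReal (c * (Nrm q.1 + C)) ^ p ∂(P.prod μ)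
      = ENNReal.ofReal c ^ p * I := by
    intro c hc
    have : ∀ q : Ω × EuclideanSpace ℝ (Fin n),
        ENNReal.ofReal (c * (Nrm q.1 + C)) ^ p
        = ENNReal.ofReal c ^ p * ENNReal.ofReal (Nrm q.1 + C) ^ p := by
      intro q
      rw [ENNReal.ofReal_mul hc, ENNReal.mul_rpow_of_nonneg _ _ hp0.le]
    simp_rw [this]
    rw [lintegral_const_mul' _ _ (ENNReal.rpow_ne_top_of_nonneg hp0.le ENNReal.ofReal_ne_top)]
    congr 1
    exact prodfst (fun ω => ENNReal.ofReal (Nrm ω + C) ^ p)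
      (((mNrm.add aemeasurable_const).ennreal_ofReal).pow aemeasurable_const)
  -- Part 1: finiteness of the p-th moment
  have part1 : ∫⁻ x, edist x x₀ ^ p
      ∂((P.prod μ).map (fun q => Φ q.1 (Real.sqrt t) q.2)) ≠ ∞ := by
    have hmeas_ed : Measurable fun x : EuclideanSpace ℝ (Fin n) => edist x x₀ ^ p :=
      (measurable_id.edist measurable_const).pow_const p
    rw [lintegral_map hmeas_ed (hΦmeas _)]
    set g1 : Ω × EuclideanSpace ℝ (Fin n) → ℝ≥0∞ :=
      fun q => edist (Φ q.1 (Real.sqrt t) q.2) q.2 with hg1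
    set g2 : Ω × EuclideanSpace ℝ (Fin n) → ℝ≥0∞ := fun q => edist q.2 x₀ with hg2
    have mg1 : Measurable g1 := (hΦmeas _).edist measurable_snd
    have mg2 : Measurable g2 := measurable_snd.edist measurable_const
    have hbound : ∀ q, edist (Φ q.1 (Real.sqrt t) q.2) x₀ ^ p ≤ (g1 q + g2 q) ^ p := by
      intro q
      exact ENNReal.rpow_le_rpow (edist_triangle _ _ _) hp0.le
    have hle : ∫⁻ q, edist (Φ q.1 (Real.sqrt t) q.2) x₀ ^ p ∂(P.prod μ)
        ≤ ∫⁻ q, (g1 q + g2 q) ^ p ∂(P.prod μ) := lintegral_mono hbound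
    -- bound ∫ g1^p
    have hg1p : ∫⁻ q, g1 q ^ p ∂(P.prod μ)
        ≤ ENNReal.ofReal (Real.sqrt t) ^ p * I := by
      rw [← prodI _ (Real.sqrt_nonneg t)]
      refine lintegral_mono fun q => ENNReal.rpow_le_rpow ?_ hp0.le
      have hkey := key (Real.sqrt t) 0 q
      rw [hΦ0, zero_sub, abs_neg, abs_of_nonneg (Real.sqrt_nonneg t)] at hkey
      exact hkey
    have hg1fin : ∫⁻ q, g1 q ^ p ∂(P.prod μ) ≠ ∞ :=
      ne_top_of_le_ne_top (ENNReal.mul_ne_top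
        (ENNReal.rpow_ne_top_of_nonneg hp0.le ENNReal.ofReal_ne_top) Ifin) hg1p
    have hg2fin : ∫⁻ q, g2 q ^ p ∂(P.prod μ) ≠ ∞ := by
      have h2 : ∫⁻ q : Ω × EuclideanSpace ℝ (Fin n), edist q.2 x₀ ^ p ∂(P.prod μ)
          = ∫⁻ x, edist x x₀ ^ p ∂μ := by
        conv_rhs => rw [← hsnd]
        rw [lintegral_map hmeas_ed measurable_snd]
      simp only [hg2]
      rw [h2]; exact hμ
    -- Minkowski to conclude finiteness of ∫ (g1+g2)^p
    have hmink := ENNReal.lintegral_Lp_add_le (μ := P.prod μ)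
      mg1.aemeasurable mg2.aemeasurable hp1
    simp only [Pi.add_apply] at hmink
    have hfin : ∫⁻ q, (g1 q + g2 q) ^ p ∂(P.prod μ) ≠ ∞ := by
      intro hcon
      rw [hcon, ENNReal.top_rpow_of_pos (by positivity)] at hmink
      have : ((∫⁻ q, g1 q ^ p ∂(P.prod μ)) ^ (1 / p)
          + (∫⁻ q, g2 q ^ p ∂(P.prod μ)) ^ (1 / p)) < ∞ :=
        ENNReal.add_lt_top.2 ⟨ENNReal.rpow_lt_top_of_nonneg (by positivity) hg1fin,
          ENNReal.rpow_lt_top_of_nonneg (by positivity) hg2fin⟩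
      exact this.ne (top_le_iff.mp hmink)
    exact ne_top_of_le_ne_top hfin hle
  refine ⟨part1, ?_⟩
  -- Part 2: the Wasserstein estimate
  have hpair : Measurable (fun q : Ω × EuclideanSpace ℝ (Fin n) =>
      (Φ q.1 (Real.sqrt s) q.2, Φ q.1 (Real.sqrt t) q.2)) :=
    (hΦmeas _).prodMk (hΦmeas _)
  set γ : Measure (EuclideanSpace ℝ (Fin n) × EuclideanSpace ℝ (Fin n)) :=
    (P.prod μ).map (fun q => (Φ q.1 (Real.sqrt s) q.2, Φ q.1 (Real.sqrt t) q.2)) with hγ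
  have hcoupling : IsCoupling ((P.prod μ).map (fun q => Φ q.1 (Real.sqrt s) q.2))
      ((P.prod μ).map (fun q => Φ q.1 (Real.sqrt t) q.2)) γ := by
    constructor
    · rw [hγ, Measure.map_map measurable_fst hpair]; rfl
    · rw [hγ, Measure.map_map measurable_snd hpair]; rfl
  have hWle : wassersteinDist p ((P.prod μ).map (fun q => Φ q.1 (Real.sqrt s) q.2))
      ((P.prod μ).map (fun q => Φ q.1 (Real.sqrt t) q.2))
      ≤ (∫⁻ z, edist z.1 z.2 ^ p ∂γ) ^ (1 / p) := by
    exact iInf_le_of_le γ (iInf_le_of_le hcoupling le_rfl)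
  have hmeas_e : Measurable fun z :
      EuclideanSpace ℝ (Fin n) × EuclideanSpace ℝ (Fin n) => edist z.1 z.2 ^ p :=
    (measurable_fst.edist measurable_snd).pow_const p
  have hsq : |Real.sqrt t - Real.sqrt s| ≤ Real.sqrt |t - s| :=
    abs_sqrt_sub_sqrt_le hs0 ht0
  have hintle : ∫⁻ z, edist z.1 z.2 ^ p ∂γ
      ≤ ENNReal.ofReal (Real.sqrt |t - s|) ^ p * I := by
    rw [hγ, lintegral_map hmeas_e hpair, ← prodI _ (Real.sqrt_nonneg _)]
    refine lintegral_mono fun q => ENNReal.rpow_le_rpow ?_ hp0.le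
    calc edist (Φ q.1 (Real.sqrt s) q.2) (Φ q.1 (Real.sqrt t) q.2)
        ≤ ENNReal.ofReal (|Real.sqrt t - Real.sqrt s| * (Nrm q.1 + C)) := key _ _ q
      _ ≤ ENNReal.ofReal (Real.sqrt |t - s| * (Nrm q.1 + C)) :=
          ENNReal.ofReal_le_ofReal
            (mul_le_mul_of_nonneg_right hsq (by linarith [hN0 q.1]))
  refine le_trans hWle ?_
  calc (∫⁻ z, edist z.1 z.2 ^ p ∂γ) ^ (1 / p)
      ≤ (ENNReal.ofReal (Real.sqrt |t - s|) ^ p * I) ^ (1 / p) :=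
        ENNReal.rpow_le_rpow hintle (by positivity)
    _ = ENNReal.ofReal (Real.sqrt |t - s|) * I ^ (1 / p) := by
        rw [ENNReal.mul_rpow_of_nonneg _ _ (by positivity), ← ENNReal.rpow_mul,
          mul_one_div_cancel hp0.ne', ENNReal.rpow_one]
    _ ≤ ENNReal.ofReal (Real.sqrt |t - s|)
        * (ENNReal.ofReal C + ENNReal.ofReal (M ^ (1 / p))) :=
        mul_le_mul_right Ibound _
    _ = ENNReal.ofReal (Real.sqrt |t - s| * (C + M ^ (1 / p))) := by
        rw [← ENNReal.ofReal_add hC0 (Real.rpow_nonneg hM0 _), ← ENNReal.ofReal_mul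
          (Real.sqrt_nonneg _)]
end

section
/- Let φ ∈ C_c^∞(M), X a W^{2,∞}-vector field on M with flow ρ_t^X, and p > 2. Then there is a constant B̄ depending only on ‖φ‖_{C³} such that for all x ∈ M and t ≥ 0: φ(ρ_t^X(x)) − φ(x) = t·(L_X φ)(x) + (t²/2)·(L_X² φ)(x) + E(x,t) with |E(x,t)| ≤ B̄·‖φ‖_{C³}·t^{min(3,p)}·‖X‖_{W^{2,∞}}^{min(3,p)}, where L_X denotes the Lie derivative (directional derivative) along X. -/
open Real ContinuousLinearMap

section Aux

variable {E F G : Type*} [NormedAddCommGroup E] [NormedSpace ℝ E]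
  [NormedAddCommGroup F] [NormedSpace ℝ F]

/-- Lipschitz estimate from a global bound on the derivative. -/
lemma lip_of_fderiv_bound {f : E → F} (hf : Differentiable ℝ f) {C : ℝ}
    (h : ∀ x, ‖fderiv ℝ f x‖ ≤ C) (y z : E) : ‖f y - f z‖ ≤ C * ‖y - z‖ :=
  Convex.norm_image_sub_le_of_norm_fderiv_le (fun x _ => hf x) (fun x _ => h x)
    convex_univ (Set.mem_univ z) (Set.mem_univ y)

lemma clm_apply_sub (a b : E →L[ℝ] F) (v w : E) :
    ‖a v - b w‖ ≤ ‖a - b‖ * ‖v‖ + ‖b‖ * ‖v - w‖ := by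
  have h : a v - b w = (a - b) v + b (v - w) := by
    simp [ContinuousLinearMap.sub_apply, map_sub]
  rw [h]
  refine (norm_add_le _ _).trans (add_le_add ?_ ?_)
  · exact (a - b).le_opNorm v
  · exact b.le_opNorm (v - w)

lemma norm_fderiv_eq_one (f : E → F) (x : E) :
    ‖fderiv ℝ f x‖ = ‖iteratedFDeriv ℝ 1 f x‖ := by
  rw [← norm_iteratedFDeriv_fderiv (n := 0), norm_iteratedFDeriv_zero]

end Aux

set_option maxHeartbeats 1000000 in
/-- second-order Taylor expansion along a flow. For `φ ∈ C_c³(ℝⁿ)` with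
`C³`-norm bounded by `Cφ`, there is a constant `B̄ > 0` (depending only on the `C³`-norm of
`φ`) such that for every `W^{2,∞}`-vector field `X` with `‖X‖_{W^{2,∞}} ≤ N`, its flow `ρ`,
every `x` and `t ≥ 0`:
`|φ(ρ_t(x)) − φ(x) − t·L_Xφ(x) − (t²/2)·L_X²φ(x)| ≤ B̄·Cφ·t^{min(3,p)}·N^{min(3,p)}`,
where `L_Xφ = dφ(X)`. -/
theorem taylor_expansion_along_flow {n : ℕ} (p : ℝ) (hp : 2 < p)
    (φ : EuclideanSpace ℝ (Fin n) → ℝ) (hφ : ContDiff ℝ 3 φ)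
    (hsupp : HasCompactSupport φ)
    (Cφ : ℝ)
    (hC0 : ∀ x, |φ x| ≤ Cφ)
    (hC1 : ∀ x, ‖iteratedFDeriv ℝ 1 φ x‖ ≤ Cφ)
    (hC2 : ∀ x, ‖iteratedFDeriv ℝ 2 φ x‖ ≤ Cφ)
    (hC3 : ∀ x, ‖iteratedFDeriv ℝ 3 φ x‖ ≤ Cφ) :
    ∃ B : ℝ, 0 < B ∧
      ∀ (X : EuclideanSpace ℝ (Fin n) → EuclideanSpace ℝ (Fin n)) (N : ℝ),
        Differentiable ℝ X →
        (∀ x, ‖X x‖ ≤ N) →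
        (∀ x, ‖fderiv ℝ X x‖ ≤ N) →
        (∀ x y, ‖fderiv ℝ X x - fderiv ℝ X y‖ ≤ N * dist x y) →
        ∀ (ρ : ℝ → EuclideanSpace ℝ (Fin n) → EuclideanSpace ℝ (Fin n)),
          (∀ x, ρ 0 x = x) →
          (∀ x t, HasDerivAt (fun u => ρ u x) (X (ρ t x)) t) →
          ∀ x (t : ℝ), 0 ≤ t →
            |φ (ρ t x) - φ x - t * fderiv ℝ φ x (X x)
                - t ^ 2 / 2 * fderiv ℝ (fun y => fderiv ℝ φ y (X y)) x (X x)| ≤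
              B * Cφ * t ^ min (3:ℝ) p * N ^ min (3:ℝ) p := by
  refine ⟨6, by norm_num, ?_⟩
  intro X N hXd hXb hXd1 hXlip ρ hρ0 hρd x t ht
  have hN0 : 0 ≤ N := le_trans (norm_nonneg _) (hXb 0)
  have hC : 0 ≤ Cφ := le_trans (abs_nonneg _) (hC0 0)
  set m : ℝ := min (3:ℝ) p with hmdef
  have hm2 : 2 ≤ m := le_min (by norm_num) hp.le
  have hm3 : m ≤ 3 := min_le_left _ _
  have hm0 : 0 < m := lt_of_lt_of_le (by norm_num) hm2
  -- regularity of φ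
  have hφ1 : Differentiable ℝ φ := hφ.differentiable (by norm_num)
  have hA : ContDiff ℝ 2 (fderiv ℝ φ) := hφ.fderiv_right (by norm_num)
  have hAd : Differentiable ℝ (fderiv ℝ φ) := hA.differentiable (by norm_num)
  have hA2 : ContDiff ℝ 1 (fderiv ℝ (fderiv ℝ φ)) := hA.fderiv_right (by norm_num)
  have hA2d : Differentiable ℝ (fderiv ℝ (fderiv ℝ φ)) := hA2.differentiable (by norm_num)
  -- norm bounds for derivatives of φ
  have hb1 : ∀ y, ‖fderiv ℝ φ y‖ ≤ Cφ := fun y => by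
    rw [norm_fderiv_eq_one]; exact hC1 y
  have hb2 : ∀ y, ‖fderiv ℝ (fderiv ℝ φ) y‖ ≤ Cφ := fun y => by
    rw [norm_fderiv_eq_one, norm_iteratedFDeriv_fderiv]; simpa using hC2 y
  letI : NormedAddCommGroup (EuclideanSpace ℝ (Fin n) →L[ℝ] EuclideanSpace ℝ (Fin n) →L[ℝ] ℝ) :=
    inferInstance
  letI : NormedSpace ℝ (EuclideanSpace ℝ (Fin n) →L[ℝ] EuclideanSpace ℝ (Fin n) →L[ℝ] ℝ) :=
    inferInstance
  have hb3 : ∀ y, ‖fderiv ℝ (fderiv ℝ (fderiv ℝ φ)) y‖ ≤ Cφ := fun y => by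
    rw [norm_fderiv_eq_one, norm_iteratedFDeriv_fderiv, norm_iteratedFDeriv_fderiv]
    simpa using hC3 y
  -- Lipschitz estimates
  have lipA : ∀ y z, ‖fderiv ℝ φ y - fderiv ℝ φ z‖ ≤ Cφ * ‖y - z‖ :=
    lip_of_fderiv_bound hAd hb2
  have lipA2 : ∀ y z, ‖fderiv ℝ (fderiv ℝ φ) y - fderiv ℝ (fderiv ℝ φ) z‖ ≤ Cφ * ‖y - z‖ :=
    lip_of_fderiv_bound hA2d hb3
  have lipX : ∀ y z, ‖X y - X z‖ ≤ N * ‖y - z‖ := lip_of_fderiv_bound hXd hXd1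
  have lipD : ∀ y z, ‖fderiv ℝ X y - fderiv ℝ X z‖ ≤ N * ‖y - z‖ := fun y z => by
    have h := hXlip y z; rwa [dist_eq_norm] at h
  -- the first and second Lie derivatives
  set L1 : EuclideanSpace ℝ (Fin n) → ℝ := fun y => fderiv ℝ φ y (X y) with hL1def
  have hL1diff : Differentiable ℝ L1 := hAd.clm_apply hXd
  set L2 : EuclideanSpace ℝ (Fin n) → ℝ := fun y => fderiv ℝ L1 y (X y) with hL2def
  have hL2eq : ∀ y, L2 y =
      fderiv ℝ φ y (fderiv ℝ X y (X y)) + fderiv ℝ (fderiv ℝ φ) y (X y) (X y) := by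
    intro y
    have := fderiv_clm_apply (hAd y) (hXd y)
    rw [hL2def]
    simp only [this, ContinuousLinearMap.add_apply, ContinuousLinearMap.coe_comp',
      Function.comp_apply, ContinuousLinearMap.flip_apply, hL1def]
  -- pointwise bounds on L1, L2
  have hL1b : ∀ y, |L1 y| ≤ Cφ * N := fun y => by
    rw [← Real.norm_eq_abs]
    exact ((fderiv ℝ φ y).le_opNorm (X y)).trans
      (mul_le_mul (hb1 y) (hXb y) (norm_nonneg _) hC)
  have hL2b : ∀ y, |L2 y| ≤ 2 * Cφ * N ^ 2 := by
    intro y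
    rw [hL2eq y]
    have h1 : |fderiv ℝ φ y (fderiv ℝ X y (X y))| ≤ Cφ * (N * N) := by
      rw [← Real.norm_eq_abs]
      refine ((fderiv ℝ φ y).le_opNorm _).trans ?_
      refine mul_le_mul (hb1 y) (((fderiv ℝ X y).le_opNorm _).trans ?_) (norm_nonneg _) hC
      exact mul_le_mul (hXd1 y) (hXb y) (norm_nonneg _) hN0
    have h2 : |fderiv ℝ (fderiv ℝ φ) y (X y) (X y)| ≤ Cφ * N * N := by
      rw [← Real.norm_eq_abs]
      refine ((fderiv ℝ (fderiv ℝ φ) y (X y)).le_opNorm _).trans ?_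
      refine mul_le_mul (((fderiv ℝ (fderiv ℝ φ) y).le_opNorm _).trans ?_) (hXb y)
        (norm_nonneg _) (by positivity)
      exact mul_le_mul (hb2 y) (hXb y) (norm_nonneg _) hC
    calc |fderiv ℝ φ y (fderiv ℝ X y (X y)) + fderiv ℝ (fderiv ℝ φ) y (X y) (X y)|
        ≤ |fderiv ℝ φ y (fderiv ℝ X y (X y))| + |fderiv ℝ (fderiv ℝ φ) y (X y) (X y)| :=
          abs_add_le _ _
      _ ≤ Cφ * (N * N) + Cφ * N * N := add_le_add h1 h2
      _ = 2 * Cφ * N ^ 2 := by ring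
  -- Lipschitz estimate for L2
  have hL2lip : ∀ y z, |L2 y - L2 z| ≤ 6 * Cφ * N ^ 2 * ‖y - z‖ := by
    intro y z
    rw [hL2eq y, hL2eq z]
    have hXy : ‖X y‖ ≤ N := hXb y
    have hXz : ‖X z‖ ≤ N := hXb z
    have hDXy : ‖fderiv ℝ X y (X y)‖ ≤ N * N :=
      ((fderiv ℝ X y).le_opNorm _).trans (mul_le_mul (hXd1 y) (hXb y) (norm_nonneg _) hN0)
    -- term 1 : fderiv φ applied to (DX · X)
    have hT1 : |fderiv ℝ φ y (fderiv ℝ X y (X y)) - fderiv ℝ φ z (fderiv ℝ X z (X z))|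
        ≤ 3 * (Cφ * N ^ 2) * ‖y - z‖ := by
      rw [← Real.norm_eq_abs]
      refine (clm_apply_sub _ _ _ _).trans ?_
      have hd : ‖fderiv ℝ X y (X y) - fderiv ℝ X z (X z)‖ ≤ 2 * (N * N) * ‖y - z‖ := by
        refine (clm_apply_sub _ _ _ _).trans ?_
        have := mul_le_mul (lipD y z) hXy (norm_nonneg _) (by positivity)
        have h2 := mul_le_mul (hXd1 z) (lipX y z) (norm_nonneg _) hN0
        nlinarith [norm_nonneg (y - z), norm_nonneg (X y)]
      have h1 := mul_le_mul (lipA y z) hDXy (norm_nonneg _) (by positivity)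
      have h2 := mul_le_mul (hb1 z) hd (norm_nonneg _) hC
      nlinarith [norm_nonneg (y - z)]
    -- term 2 : second derivative applied to (X, X)
    have hT2 : |fderiv ℝ (fderiv ℝ φ) y (X y) (X y) - fderiv ℝ (fderiv ℝ φ) z (X z) (X z)|
        ≤ 3 * (Cφ * N ^ 2) * ‖y - z‖ := by
      rw [← Real.norm_eq_abs]
      refine (clm_apply_sub _ _ _ _).trans ?_
      have hd : ‖fderiv ℝ (fderiv ℝ φ) y (X y) - fderiv ℝ (fderiv ℝ φ) z (X z)‖
          ≤ 2 * (Cφ * N) * ‖y - z‖ := by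
        refine (clm_apply_sub _ _ _ _).trans ?_
        have h1 := mul_le_mul (lipA2 y z) hXy (norm_nonneg _) (by positivity)
        have h2 := mul_le_mul (hb2 z) (lipX y z) (norm_nonneg _) hC
        nlinarith [norm_nonneg (y - z)]
      have hbz : ‖fderiv ℝ (fderiv ℝ φ) z (X z)‖ ≤ Cφ * N :=
        ((fderiv ℝ (fderiv ℝ φ) z).le_opNorm _).trans
          (mul_le_mul (hb2 z) hXz (norm_nonneg _) hC)
      have h1 := mul_le_mul hd hXy (norm_nonneg _) (by positivity)
      have h2 := mul_le_mul hbz (lipX y z) (norm_nonneg _) (by positivity)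
      nlinarith [norm_nonneg (y - z), norm_nonneg (X y)]
    calc |_| ≤ |fderiv ℝ φ y (fderiv ℝ X y (X y)) - fderiv ℝ φ z (fderiv ℝ X z (X z))|
          + |fderiv ℝ (fderiv ℝ φ) y (X y) (X y) - fderiv ℝ (fderiv ℝ φ) z (X z) (X z)| := by
          rw [show fderiv ℝ φ y (fderiv ℝ X y (X y)) + fderiv ℝ (fderiv ℝ φ) y (X y) (X y)
            - (fderiv ℝ φ z (fderiv ℝ X z (X z)) + fderiv ℝ (fderiv ℝ φ) z (X z) (X z))
            = (fderiv ℝ φ y (fderiv ℝ X y (X y)) - fderiv ℝ φ z (fderiv ℝ X z (X z)))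
            + (fderiv ℝ (fderiv ℝ φ) y (X y) (X y)
              - fderiv ℝ (fderiv ℝ φ) z (X z) (X z)) from by ring]
          exact abs_add_le _ _
      _ ≤ 3 * (Cφ * N ^ 2) * ‖y - z‖ + 3 * (Cφ * N ^ 2) * ‖y - z‖ := add_le_add hT1 hT2
      _ = 6 * Cφ * N ^ 2 * ‖y - z‖ := by ring
  -- flow estimates
  have hρb : ∀ s ∈ Set.Icc (0:ℝ) t, ‖ρ s x - x‖ ≤ N * s := by
    intro s hs
    have := norm_image_sub_le_of_norm_deriv_le_segment'
      (f := fun u => ρ u x) (f' := fun u => X (ρ u x)) (a := 0) (b := t) (C := N)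
      (fun u _ => (hρd x u).hasDerivWithinAt) (fun u _ => hXb _) s hs
    simpa [hρ0 x] using this
  -- derivatives along the flow
  have hg' : ∀ s, HasDerivAt (fun u => φ (ρ u x)) (L1 (ρ s x)) s := by
    intro s
    exact (hφ1 (ρ s x)).hasFDerivAt.comp_hasDerivAt s (hρd x s)
  have hg'' : ∀ s, HasDerivAt (fun u => L1 (ρ u x)) (L2 (ρ s x)) s := by
    intro s
    exact (hL1diff (ρ s x)).hasFDerivAt.comp_hasDerivAt s (hρd x s)
  -- the error functions
  set e1 : ℝ → ℝ := fun s => L1 (ρ s x) - L1 x - s * L2 x with he1def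
  set e0 : ℝ → ℝ := fun s => φ (ρ s x) - φ x - s * L1 x - s ^ 2 / 2 * L2 x with he0def
  have he1 : ∀ s, HasDerivAt e1 (L2 (ρ s x) - L2 x) s := by
    intro s
    have h := ((hg'' s).sub_const (L1 x)).sub ((hasDerivAt_id s).mul_const (L2 x))
    exact h.congr_deriv (by simp)
  have he0 : ∀ s, HasDerivAt e0 (e1 s) s := by
    intro s
    have hpow : HasDerivAt (fun u : ℝ => u ^ 2 / 2 * L2 x) (s * L2 x) s := by
      have := ((hasDerivAt_pow 2 s).div_const 2).mul_const (L2 x)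
      exact this.congr_deriv (by norm_num)
    have h := (((hg' s).sub_const (φ x)).sub ((hasDerivAt_id s).mul_const (L1 x))).sub hpow
    exact h.congr_deriv (by simp [he1def])
  -- bound on e1 over [0, t]
  have he1b : ∀ s ∈ Set.Icc (0:ℝ) t, |e1 s| ≤ 6 * Cφ * N ^ 3 * t * s := by
    intro s hs
    have key := norm_image_sub_le_of_norm_deriv_le_segment'
      (f := e1) (f' := fun u => L2 (ρ u x) - L2 x) (a := 0) (b := t)
      (C := 6 * Cφ * N ^ 3 * t)
      (fun u hu => (he1 u).hasDerivWithinAt)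
      (fun u hu => by
        have h1 := hL2lip (ρ u x) x
        have h2 := hρb u ⟨hu.1, hu.2.le⟩
        have hu2 : u ≤ t := hu.2.le
        have hu0 : 0 ≤ u := hu.1
        rw [Real.norm_eq_abs]
        calc |L2 (ρ u x) - L2 x| ≤ 6 * Cφ * N ^ 2 * ‖ρ u x - x‖ := h1
          _ ≤ 6 * Cφ * N ^ 2 * (N * u) := by
              refine mul_le_mul_of_nonneg_left (h2) (by positivity)
          _ = 6 * Cφ * N ^ 3 * u := by ring
          _ ≤ 6 * Cφ * N ^ 3 * t := mul_le_mul_of_nonneg_left hu2 (by positivity)) s hs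
    have he10 : e1 0 = 0 := by simp [he1def, hρ0 x]
    rw [Real.norm_eq_abs, he10, sub_zero, sub_zero] at key
    exact key
  -- bound on e0 at t
  have he0b : |e0 t| ≤ 6 * Cφ * N ^ 3 * t * t * t := by
    have key := norm_image_sub_le_of_norm_deriv_le_segment'
      (f := e0) (f' := e1) (a := 0) (b := t)
      (C := 6 * Cφ * N ^ 3 * t * t)
      (fun u hu => (he0 u).hasDerivWithinAt)
      (fun u hu => by
        rw [Real.norm_eq_abs]
        calc |e1 u| ≤ 6 * Cφ * N ^ 3 * t * u := he1b u ⟨hu.1, hu.2.le⟩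
          _ ≤ 6 * Cφ * N ^ 3 * t * t := by
              refine mul_le_mul_of_nonneg_left hu.2.le (by positivity)) t
      ⟨ht, le_rfl⟩
    have he00 : e0 0 = 0 := by simp [he0def, hρ0 x]
    rw [Real.norm_eq_abs, he00, sub_zero, sub_zero] at key
    exact key
  -- case split on t * N
  have hrpow : t ^ m * N ^ m = (t * N) ^ m := (Real.mul_rpow ht hN0).symm
  have htN : 0 ≤ t * N := mul_nonneg ht hN0
  have final : |e0 t| ≤ 6 * Cφ * t ^ m * N ^ m := by
    rcases le_or_gt (t * N) 1 with hle | hgt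
    · -- small regime : use the third-order bound
      have h3 : (t * N) ^ (3:ℝ) ≤ (t * N) ^ m :=
        Real.rpow_le_rpow_of_exponent_ge' htN hle hm0.le hm3
      have h3' : (t * N) ^ (3:ℕ) ≤ (t * N) ^ m := by
        rw [← Real.rpow_natCast (t * N) 3]
        exact_mod_cast h3
      calc |e0 t| ≤ 6 * Cφ * N ^ 3 * t * t * t := he0b
        _ = 6 * Cφ * (t * N) ^ (3:ℕ) := by ring
        _ ≤ 6 * Cφ * (t * N) ^ m := by
            exact mul_le_mul_of_nonneg_left h3' (by positivity)
        _ = 6 * Cφ * t ^ m * N ^ m := by rw [← hrpow]; ring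
    · -- large regime : crude bound
      have ha1 : 1 ≤ t * N := hgt.le
      have h2 : (t * N) ^ (2:ℕ) ≤ (t * N) ^ m := by
        rw [← Real.rpow_natCast (t * N) 2]
        exact_mod_cast Real.rpow_le_rpow_of_exponent_le ha1 hm2
      have hcrude : |e0 t| ≤ 2 * Cφ + t * (Cφ * N) + t ^ 2 / 2 * (2 * Cφ * N ^ 2) := by
        have h1 : |φ (ρ t x) - φ x| ≤ 2 * Cφ :=
          (abs_sub _ _).trans (by linarith [hC0 (ρ t x), hC0 x])
        have h2' : |t * L1 x| ≤ t * (Cφ * N) := by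
          rw [abs_mul, abs_of_nonneg ht]
          exact mul_le_mul_of_nonneg_left (hL1b x) ht
        have h3' : |t ^ 2 / 2 * L2 x| ≤ t ^ 2 / 2 * (2 * Cφ * N ^ 2) := by
          rw [abs_mul, abs_of_nonneg (by positivity : (0:ℝ) ≤ t ^ 2 / 2)]
          exact mul_le_mul_of_nonneg_left (hL2b x) (by positivity)
        calc |e0 t| = |(φ (ρ t x) - φ x) - t * L1 x - t ^ 2 / 2 * L2 x| := rfl
          _ ≤ |φ (ρ t x) - φ x| + |t * L1 x| + |t ^ 2 / 2 * L2 x| := by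
              refine (abs_sub _ _).trans (add_le_add ((abs_sub _ _).trans ?_) le_rfl)
              exact le_rfl
          _ ≤ 2 * Cφ + t * (Cφ * N) + t ^ 2 / 2 * (2 * Cφ * N ^ 2) :=
              add_le_add (add_le_add h1 h2') h3'
      have hsq1 : (1:ℝ) ≤ (t * N) ^ 2 := by nlinarith [ha1]
      have hsq2 : t * N ≤ (t * N) ^ 2 := by nlinarith [ha1, htN]
      have : |e0 t| ≤ 4 * Cφ * (t * N) ^ (2:ℕ) := by
        nlinarith [hcrude, hC, mul_le_mul_of_nonneg_left hsq1 hC,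
          mul_le_mul_of_nonneg_left hsq2 hC]
      calc |e0 t| ≤ 4 * Cφ * (t * N) ^ (2:ℕ) := this
        _ ≤ 6 * Cφ * (t * N) ^ m := by nlinarith [Real.rpow_nonneg htN m, hC]
        _ = 6 * Cφ * t ^ m * N ^ m := by rw [← hrpow]; ring

  simp only [he0def, hL2def, hL1def] at final ⊢
  exact final
end
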